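/- Let G be an FC group and D : G → U(n) a unitary representation. Then G'/(ker D ∩ G') is finite, where G' is the commutator subgroup of G. -/

import Mathlib

/-!
The image `K = D(G)` is again an FC group, and it is linear: the span of `K` in the matrix algebra
is finite-dimensional, so it is spanned by finitely many elements of `K`. Their common centralizer
has finite index (each one has finitely many conjugates) and centralizes the whole span, so the
center of `K` has finite index. Then `K` has finitely many commutators, and by Schur's theorem `K'`
is finite; and `G' ⧸ (ker D ∩ G')` is isomorphic to the image of `G'`, which is `K'`.
-/

open Subgroup

open scoped commutatorElement

theorem commutatorElement_mul_right_of_mem_center {G : Type*} [Group G] (g h : G) {z : G}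
    (hz : z ∈ center G) : ⁅g, h * z⁆ = ⁅g, h⁆ := by
  rw [commutatorElement_def, commutatorElement_def, ← mul_assoc g h z, mul_assoc (g * h) z,
    ← mem_center_iff.mp hz g⁻¹]
  group

theorem commutatorElement_mul_left_of_mem_center {G : Type*} [Group G] (g h : G) {z : G}
    (hz : z ∈ center G) : ⁅g * z, h⁆ = ⁅g, h⁆ := by
  rw [← commutatorElement_inv, commutatorElement_mul_right_of_mem_center h g hz,
    commutatorElement_inv]

theorem finite_commutatorSet_of_finiteIndex_center (G : Type*) [Group G]
    [(center G).FiniteIndex] : Finite (commutatorSet G) := by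
  have : Finite (G ⧸ center G) := finite_quotient_of_finiteIndex
  refine Set.Finite.to_subtype <| (Set.finite_range fun p : (G ⧸ center G) × (G ⧸ center G) =>
    ⁅p.1.out, p.2.out⁆).subset ?_
  rintro _ ⟨g, h, rfl⟩
  obtain ⟨z, hz⟩ := QuotientGroup.mk_out_eq_mul (center G) g
  obtain ⟨w, hw⟩ := QuotientGroup.mk_out_eq_mul (center G) h
  exact ⟨(g, h), by simp only [hz, hw, commutatorElement_mul_left_of_mem_center _ _ z.2,
    commutatorElement_mul_right_of_mem_center _ _ w.2]⟩

theorem map_commutator_of_surjective {G K : Type*} [Group G] [Group K] (f : G →* K)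
    (hf : Function.Surjective f) : (commutator G).map f = commutator K := by
  rw [commutator_def, commutator_def, map_commutator, map_top_of_surjective f hf]

theorem finite_quotient_ker_inf_commutator {G K : Type*} [Group G] [Group K] (f : G →* K)
    (hf : Function.Surjective f) [Finite (commutator K)] :
    Finite (commutator G ⧸ (f.ker ⊓ commutator G).subgroupOf (commutator G)) := by
  rw [inf_subgroupOf_right, ← MonoidHom.ker_domRestrict]
  have : Finite (f.domRestrict (commutator G)).range := by
    rwa [MonoidHom.domRestrict_range, map_commutator_of_surjective f hf]
  exact .of_equiv _ (QuotientGroup.quotientKerEquivRange _).symm.toEquiv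

def Group.IsFC (G : Type*) [Group G] : Prop :=
  ∀ g : G, (Set.range fun h : G => h * g * h⁻¹).Finite

namespace Group.IsFC

variable {G : Type*} [Group G]

theorem finiteIndex_centralizer_singleton (hG : IsFC G) (g : G) :
    (centralizer {g}).FiniteIndex := by
  have : Finite (MulAction.orbit (ConjAct G) g) := (hG g).to_subtype
  have : Finite (G ⧸ centralizer {g}) :=
    .of_equiv _ ((MulAction.orbitEquivQuotientStabilizer (ConjAct G) g).trans
      (quotientEquivOfEq (ConjAct.stabilizer_eq_centralizer g)))
  exact finiteIndex_of_finite_quotient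

theorem finiteIndex_centralizer (hG : IsFC G) {T : Set G} (hT : T.Finite) :
    (centralizer T).FiniteIndex := by
  rw [centralizer_eq_iInf, ← hT.coe_toFinset]
  exact finiteIndex_iInf' _ fun g _ => hG.finiteIndex_centralizer_singleton g

theorem of_surjective {K : Type*} [Group K] (hG : IsFC G) (f : G →* K)
    (hf : Function.Surjective f) : IsFC K := by
  intro k
  obtain ⟨g, rfl⟩ := hf k
  refine ((hG g).image f).subset ?_
  rintro _ ⟨k', rfl⟩
  obtain ⟨g', rfl⟩ := hf k'
  exact ⟨g' * g * g'⁻¹, ⟨g', rfl⟩, by simp⟩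

theorem finiteIndex_center_of_injective {R A : Type*} [CommRing R] [Ring A] [Algebra R A]
    [IsNoetherian R A] (hG : IsFC G) (φ : G →* A) (hφ : Function.Injective φ) :
    (center G).FiniteIndex := by
  obtain ⟨S, hS_range, hS_span⟩ := (Submodule.fg_span_iff_fg_span_finset_subset (R := R)
    (Set.range φ)).mp (IsNoetherian.noetherian _)
  set T := φ ⁻¹' S
  have hT : T.Finite := S.finite_toSet.preimage hφ.injOn
  have := hG.finiteIndex_centralizer hT
  refine finiteIndex_of_le (H := centralizer T) fun x hx => mem_center_iff.mpr fun y => hφ ?_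
  have hS_comm : (S : Set A) ⊆ Subalgebra.centralizer R {φ x} := by
    intro a ha
    obtain ⟨t, rfl⟩ := hS_range ha
    rw [SetLike.mem_coe, Subalgebra.mem_centralizer_iff]
    rintro _ rfl
    simp only [← map_mul, mem_centralizer_iff.mp hx t ha]
  have hy : φ y ∈ Submodule.span R (S : Set A) :=
    hS_span ▸ Submodule.subset_span (Set.mem_range_self y)
  have := Submodule.span_le (p := Subalgebra.toSubmodule (.centralizer R {φ x})) |>.mpr hS_comm hy
  simpa using ((Subalgebra.mem_centralizer_iff R).mp this (φ x) rfl).symm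

end Group.IsFC

theorem stmt_6_general {G : Type*} [Group G] (n : ℕ)
    (hFC : ∀ x : G, (Set.range fun h : G => h * x * h⁻¹).Finite)
    (D : G →* Matrix.unitaryGroup (Fin n) ℂ) :
    Finite (↥(commutator G) ⧸ ((D.ker ⊓ commutator G).subgroupOf (commutator G))) := by
  have hFC_range : Group.IsFC D.range :=
    Group.IsFC.of_surjective hFC D.rangeRestrict D.rangeRestrict_surjective
  have : (center D.range).FiniteIndex := hFC_range.finiteIndex_center_of_injective (R := ℂ)
    ((Matrix.unitaryGroup (Fin n) ℂ).subtype.comp D.range.subtype)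
    (Subtype.val_injective.comp Subtype.val_injective)
  have := finite_commutatorSet_of_finiteIndex_center D.range
  rw [← D.ker_rangeRestrict]
  exact finite_quotient_ker_inf_commutator D.rangeRestrict D.rangeRestrict_surjective

theorem stmt_6 {G : Type*} [Group G] (n : ℕ)
    (hFC : ∀ x : G, (Set.range fun h : G => h * x * h⁻¹).Finite)
    (D : G →* Matrix.unitaryGroup (Fin n) ℂ)
    [((D.ker ⊓ commutator G).subgroupOf (commutator G)).Normal] :
    Finite (↥(commutator G) ⧸ ((D.ker ⊓ commutator G).subgroupOf (commutator G))) :=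
  stmt_6_general n hFC D
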